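/- Let E be a real inner product space, let g : E → ℝ be convex, let s : E → ℝ be differentiable, and let α > 0. Fix x_prev ∈ E, set y := x_prev - α∇s(x_prev), and let x ∈ E minimize the map z ↦ g(z) + (1/(2α))‖z - y‖² over E. Then for every z ∈ E, g(x) ≤ g(z) - (1/α)⟪x_prev - x, z - x⟫ + ⟪∇s(x_prev), z - x⟫. -/

import Mathlib

/-!
Minimality of `x` along the segment towards `z`, combined with convexity of `g`, gives
`t (g x - g z) ≤ 2 c t ⟪x - y, z - x⟫ + c t² ‖z - x‖²` for `t ∈ (0, 1]`; dividing by `t` and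
letting `t → 0⁺` shows that `2 c (y - x)` is a subgradient of `g` at `x`. For `c = 1 / (2 α)`
and `y = x_prev - α ∇s(x_prev)` this is the claimed bound.
-/

open Filter Set Topology
open scoped RealInnerProductSpace

theorem le_of_forall_mem_Ioc_le_add_mul {a b K : ℝ} (h : ∀ t ∈ Ioc (0 : ℝ) 1, a ≤ b + t * K) :
    a ≤ b := by
  have hlim : Tendsto (fun t : ℝ => b + t * K) (𝓝[>] 0) (𝓝 b) :=
    ((by fun_prop : Continuous fun t : ℝ => b + t * K).tendsto' 0 b (by simp)).mono_left
      nhdsWithin_le_nhds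
  exact ge_of_tendsto hlim (eventually_of_mem (Ioc_mem_nhdsGT one_pos) h)

section

variable {E : Type*} [NormedAddCommGroup E] [InnerProductSpace ℝ E]

theorem norm_add_smul_sq_real (u v : E) (t : ℝ) :
    ‖u + t • v‖ ^ 2 = ‖u‖ ^ 2 + 2 * t * ⟪u, v⟫ + t ^ 2 * ‖v‖ ^ 2 := by
  rw [norm_add_sq_real, real_inner_smul_right, norm_smul, mul_pow, Real.norm_eq_abs, sq_abs]
  ring

theorem ConvexOn.le_add_inner_of_isMinOn_add_sq_norm {S : Set E} {g : E → ℝ}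
    (hg : ConvexOn ℝ S g) {c : ℝ} {x y z : E}
    (hmin : IsMinOn (fun w => g w + c * ‖w - y‖ ^ 2) S x) (hx : x ∈ S) (hz : z ∈ S) :
    g x ≤ g z + 2 * c * ⟪x - y, z - x⟫ := by
  refine le_of_forall_mem_Ioc_le_add_mul (K := c * ‖z - x‖ ^ 2) fun t ⟨ht0, ht1⟩ => ?_
  have hseg : (1 - t) • x + t • z = x + t • (z - x) := by module
  have hconv : g (x + t • (z - x)) ≤ (1 - t) * g x + t * g z := by
    simpa only [hseg, smul_eq_mul] using hg.2 hx hz (sub_nonneg.mpr ht1) ht0.le (sub_add_cancel 1 t)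
  have hmin_t : g x + c * ‖x - y‖ ^ 2 ≤ g (x + t • (z - x)) + c * ‖x + t • (z - x) - y‖ ^ 2 :=
    hmin (hseg ▸ hg.1 hx hz (sub_nonneg.mpr ht1) ht0.le (sub_add_cancel 1 t))
  rw [add_sub_right_comm, norm_add_smul_sq_real] at hmin_t
  have hscaled : t * g x ≤ t * (g z + 2 * c * ⟪x - y, z - x⟫ + t * (c * ‖z - x‖ ^ 2)) := by
    linear_combination hmin_t + hconv
  exact le_of_mul_le_mul_left hscaled ht0

end

theorem prox_gradient_nonsmooth_bound_general
    {E : Type*} [NormedAddCommGroup E] [InnerProductSpace ℝ E]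
    (g : E → ℝ) (hg_conv : ConvexOn ℝ Set.univ g)
    (ds : E → E)
    (α : ℝ) (hα : 0 < α)
    (xprev : E) (y : E) (hy : y = xprev - α • ds xprev)
    (x : E)
    (hx_min : ∀ z : E, g x + 1 / (2 * α) * ‖x - y‖ ^ 2 ≤ g z + 1 / (2 * α) * ‖z - y‖ ^ 2) :
    ∀ z : E, g x ≤ g z - 1 / α * ⟪xprev - x, z - x⟫ + ⟪ds xprev, z - x⟫ := by
  intro z
  have hsubgrad := hg_conv.le_add_inner_of_isMinOn_add_sq_norm
    (isMinOn_univ_iff.mpr hx_min) (mem_univ x) (mem_univ z)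
  have hxy : x - y = α • ds xprev - (xprev - x) := by rw [hy]; abel
  rw [hxy, inner_sub_left, real_inner_smul_left] at hsubgrad
  convert hsubgrad using 1
  field_simp
  ring

/-- Inequality (28): bound on the nonsmooth part `g` at the proximal-gradient iterate
`x = prox_g^α(x_prev - α∇s(x_prev))`. -/
theorem prox_gradient_nonsmooth_bound
    {E : Type*} [NormedAddCommGroup E] [InnerProductSpace ℝ E]
    (g : E → ℝ) (hg_conv : ConvexOn ℝ Set.univ g)
    (s : E → ℝ) (ds : E → E)
    (hs_diff : ∀ u : E, HasFDerivAt s (innerSL ℝ (ds u)) u)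
    (α : ℝ) (hα : 0 < α)
    (xprev : E) (y : E) (hy : y = xprev - α • ds xprev)
    (x : E)
    (hx_min : ∀ z : E, g x + 1 / (2 * α) * ‖x - y‖ ^ 2 ≤ g z + 1 / (2 * α) * ‖z - y‖ ^ 2) :
    ∀ z : E, g x ≤ g z - 1 / α * ⟪xprev - x, z - x⟫ + ⟪ds xprev, z - x⟫ :=
  prox_gradient_nonsmooth_bound_general g hg_conv ds α hα xprev y hy x hx_min
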